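/- arXiv:2502.20149 — 4 statements merged into one kernel-verified Lean document; each statement's English description precedes it below -/
import Mathlib

section
/- Let ℓ > 0 and φ ∈ [0, π]. If there exists a realization x : ZMod 8 → EuclideanSpace ℝ (Fin 3) of the cyclooctane linkage with edge length ℓ and bond angle φ, then φ ≤ 3π/4. (Equivalently, for φ > 3π/4 the configuration space of the cyclooctane linkage is empty.) -/
/-!
Write `uᵢ = xᵢ₊₁ - xᵢ` for the edge vectors of a realization: they all have length `ℓ`, they
sum to zero, and consecutive ones make the angle `t = π - φ`. By the triangle inequality for
angles, `∠(u₀, uₖ) ≤ min(k, 8 - k) · t`, so if `t < π / 4` then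
`0 = ⟪u₀, ∑ uᵢ⟫ ≥ ℓ² (1 + 2 cos t + 2 cos 2t + 2 cos 3t + cos 4t) = 2ℓ² cos 2t (1 + 2 cos t + cos 2t) > 0`.
-/

open Real EuclideanGeometry
open scoped RealInnerProductSpace

/-- A realization of the cyclooctane linkage with edge length `ℓ` and bond angle `φ`. -/
def IsCyclooctaneRealization (ℓ φ : ℝ) (x : ZMod 8 → EuclideanSpace ℝ (Fin 3)) : Prop :=
  (∀ i : ZMod 8, dist (x i) (x (i + 1)) = ℓ) ∧
  (∀ i : ZMod 8, ∠ (x (i - 1)) (x i) (x (i + 1)) = φ)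

lemma cos_sum_pos_of_abs_lt_pi_div_four {t : ℝ} (ht : |t| < π / 4) :
    0 < 1 + 2 * cos t + 2 * cos (2 * t) + 2 * cos (3 * t) + cos (4 * t) := by
  obtain ⟨ht₀, ht₁⟩ := abs_lt.mp ht
  have hcos : 0 < cos t := cos_pos_of_mem_Ioo ⟨by linarith, by linarith⟩
  have hcos₂ : 0 < cos (2 * t) := cos_pos_of_mem_Ioo ⟨by linarith, by linarith⟩
  have hfactor : 1 + 2 * cos t + 2 * cos (2 * t) + 2 * cos (3 * t) + cos (4 * t) =
      2 * cos (2 * t) * (1 + 2 * cos t + cos (2 * t)) := by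
    rw [show 4 * t = 2 * (2 * t) by ring, cos_two_mul (2 * t), cos_three_mul, cos_two_mul]
    ring
  rw [hfactor]
  positivity

lemma sum_sub_comp_add_right_eq_zero {ι M : Type*} [Fintype ι] [AddGroup ι] [AddCommGroup M]
    (x : ι → M) (c : ι) : ∑ i, (x (i + c) - x i) = 0 := by
  rw [Finset.sum_sub_distrib, sub_eq_zero]
  exact Equiv.sum_comp (Equiv.addRight c) x

namespace InnerProductGeometry

variable {V : Type*} [NormedAddCommGroup V] [InnerProductSpace ℝ V]

lemma cos_mul_norm_mul_norm_le_inner {x y : V} {s : ℝ} (hs : angle x y ≤ s) (hsπ : s ≤ π) :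
    cos s * (‖x‖ * ‖y‖) ≤ ⟪x, y⟫ := by
  rw [← cos_angle_mul_norm_mul_norm]
  gcongr
  exact cos_le_cos_of_nonneg_of_le_pi (angle_nonneg x y) hsπ hs

lemma angle_sub_sub_eq_pi_sub_angle (a b c : V) : angle (b - a) (c - b) = π - ∠ a b c := by
  rw [EuclideanGeometry.angle, vsub_eq_sub, vsub_eq_sub, ← angle_neg_left, neg_sub]

variable {ι : Type*} {u : ι → V} {t : ℝ}

lemma angle_add_natCast_le [AddMonoidWithOne ι] (hu : ∀ i, angle (u i) (u (i + 1)) ≤ t)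
    (i : ι) {k : ℕ} (hk : 1 ≤ k) : angle (u i) (u (i + k)) ≤ k * t := by
  induction k, hk using Nat.le_induction with
  | base => simpa using hu i
  | succ k _ ih =>
    calc angle (u i) (u (i + ↑(k + 1)))
        ≤ angle (u i) (u (i + k)) + angle (u (i + k)) (u (i + k + 1)) := by
          rw [Nat.cast_succ, ← add_assoc]
          exact angle_le_angle_add_angle _ _ _
      _ ≤ k * t + t := add_le_add ih (hu _)
      _ = ↑(k + 1) * t := by push_cast; ring

lemma angle_sub_natCast_le [AddGroupWithOne ι] (hu : ∀ i, angle (u i) (u (i + 1)) ≤ t)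
    (i : ι) {k : ℕ} (hk : 1 ≤ k) : angle (u i) (u (i - k)) ≤ k * t := by
  simpa [angle_comm] using angle_add_natCast_le hu (i - k) hk

lemma sum_ne_zero_of_angle_lt_pi_div_four {u : ZMod 8 → V} {ℓ : ℝ} (hℓ : 0 < ℓ)
    (hnorm : ∀ i, ‖u i‖ = ℓ) (ht : t < π / 4) (hu : ∀ i, angle (u i) (u (i + 1)) ≤ t) :
    ∑ i, u i ≠ 0 := by
  have ht₀ : 0 ≤ t := (angle_nonneg _ _).trans (hu 0)
  have hbound : ∀ (j : ZMod 8) (k : ℕ), (j = k ∨ j = -k) → 1 ≤ k → k ≤ 4 →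
      cos (k * t) * ℓ ^ 2 ≤ ⟪u 0, u j⟫ := by
    intro j k hj hk₁ hk₄
    have hkt : k * t ≤ π := by
      have : (k : ℝ) ≤ 4 := by exact_mod_cast hk₄
      nlinarith
    have hangle : angle (u 0) (u j) ≤ k * t := by
      rcases hj with rfl | rfl
      · simpa using angle_add_natCast_le hu 0 hk₁
      · simpa using angle_sub_natCast_le hu 0 hk₁
    simpa [hnorm, sq] using cos_mul_norm_mul_norm_le_inner hangle hkt
  have h₀ : ⟪u 0, u 0⟫ = ℓ ^ 2 := by rw [real_inner_self_eq_norm_sq, hnorm]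
  have h₁ := hbound 1 1 (by decide) (by norm_num) (by norm_num)
  have h₂ := hbound 2 2 (by decide) (by norm_num) (by norm_num)
  have h₃ := hbound 3 3 (by decide) (by norm_num) (by norm_num)
  have h₄ := hbound 4 4 (by decide) (by norm_num) (by norm_num)
  have h₅ := hbound 5 3 (by decide) (by norm_num) (by norm_num)
  have h₆ := hbound 6 2 (by decide) (by norm_num) (by norm_num)
  have h₇ := hbound 7 1 (by decide) (by norm_num) (by norm_num)
  push_cast at h₁ h₂ h₃ h₄ h₅ h₆ h₇
  rw [one_mul] at h₁ h₇
  have hexpand : ∑ i, ⟪u 0, u i⟫ = ⟪u 0, u 0⟫ + ⟪u 0, u 1⟫ + ⟪u 0, u 2⟫ + ⟪u 0, u 3⟫ +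
      ⟪u 0, u 4⟫ + ⟪u 0, u 5⟫ + ⟪u 0, u 6⟫ + ⟪u 0, u 7⟫ := Fin.sum_univ_eight _
  have hpos : 0 < ⟪u 0, ∑ i, u i⟫ := by
    rw [inner_sum, hexpand]
    calc 0 < (1 + 2 * cos t + 2 * cos (2 * t) + 2 * cos (3 * t) + cos (4 * t)) * ℓ ^ 2 :=
          mul_pos (cos_sum_pos_of_abs_lt_pi_div_four (abs_lt.mpr ⟨by linarith, ht⟩)) (by positivity)
      _ ≤ _ := by linear_combination h₁ + h₂ + h₃ + h₄ + h₅ + h₆ + h₇ - h₀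
  intro hsum
  simp [hsum] at hpos

end InnerProductGeometry

theorem angle_le_of_exists_cyclooctaneRealization_general
    (ℓ φ : ℝ) (hℓ : 0 < ℓ)
    (h : ∃ x : ZMod 8 → EuclideanSpace ℝ (Fin 3), IsCyclooctaneRealization ℓ φ x) :
    φ ≤ 3 * π / 4 := by
  obtain ⟨x, hdist, hangle⟩ := h
  set u : ZMod 8 → EuclideanSpace ℝ (Fin 3) := fun i => x (i + 1) - x i
  have hnorm (i : ZMod 8) : ‖u i‖ = ℓ := by rw [← hdist i, dist_comm, dist_eq_norm]
  have hturn (i : ZMod 8) : InnerProductGeometry.angle (u i) (u (i + 1)) = π - φ := by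
    have := hangle (i + 1)
    rw [add_sub_cancel_right] at this
    rw [← this]
    exact InnerProductGeometry.angle_sub_sub_eq_pi_sub_angle _ _ _
  by_contra hφ
  have hclosed : ∑ i, u i = 0 := sum_sub_comp_add_right_eq_zero x 1
  exact InnerProductGeometry.sum_ne_zero_of_angle_lt_pi_div_four hℓ hnorm
    (t := π - φ) (by linarith) (fun i => (hturn i).le) hclosed

theorem angle_le_of_exists_cyclooctaneRealization
    (ℓ φ : ℝ) (hℓ : 0 < ℓ) (hφ : φ ∈ Set.Icc 0 π)
    (h : ∃ x : ZMod 8 → EuclideanSpace ℝ (Fin 3), IsCyclooctaneRealization ℓ φ x) :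
    φ ≤ 3 * π / 4 :=
  angle_le_of_exists_cyclooctaneRealization_general ℓ φ hℓ h
end

section
/- Let ℓ > 0 and let x and y both be realizations of the cyclooctane linkage with edge length ℓ and bond angle φ = 3π/4. Then there exists an orientation-preserving affine isometry equivalence f of EuclideanSpace ℝ (Fin 3) such that y i = f (x i) for every i ∈ ZMod 8. (Hence for φ = 3π/4 the configuration space of the cyclooctane linkage consists of a single point, represented by the planar regular octagon.) -/
/-!
Let `u i = x (i + 1) - x i` be the edge vectors of a realization: they have length `ℓ`,
consecutive ones make the angle `π / 4`, and they sum to zero. By the triangle inequality for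
angles, `⟪u i, u (i + k)⟫ ≥ ℓ ^ 2 * cos (k * π / 4)` for `k ≤ 4`, and symmetrically for `k ≥ 4`.
The eight inner products `⟪u i, u (i + k)⟫` sum to `⟪u i, ∑ u⟫ = 0`, while the lower bounds other
than the one for `k = 2` already sum to zero; hence `u i ⊥ u (i + 2)`. This forces the planar
recurrence `u (i + 2) = √2 • u (i + 1) - u i`, so the octagon is determined by the orthonormal pair
`u 0 / ℓ, u 2 / ℓ`, and any two such pairs in `ℝ³` are related by a rotation: the third direction
is free, so a reflection fixing the pair corrects the orientation.
-/

open Real EuclideanGeometry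

/-- An affine isometry equivalence of `EuclideanSpace ℝ (Fin 3)` is orientation-preserving
if its linear part has determinant `1`. -/
def OrientationPreserving
    (f : EuclideanSpace ℝ (Fin 3) ≃ᵃⁱ[ℝ] EuclideanSpace ℝ (Fin 3)) : Prop :=
  LinearMap.det f.linearIsometryEquiv.toLinearEquiv.toLinearMap = 1

open Module RealInnerProductSpace

theorem ZMod.sum_univ_eight {M : Type*} [AddCommMonoid M] (f : ZMod 8 → M) :
    ∑ i, f i = f 0 + f 1 + f 2 + f 3 + f 4 + f 5 + f 6 + f 7 :=
  Fin.sum_univ_eight f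

section InnerProductSpace

variable {E : Type*} [NormedAddCommGroup E] [InnerProductSpace ℝ E]

theorem mul_cos_le_inner_of_angle_le {x y : E} {θ : ℝ}
    (h : InnerProductGeometry.angle x y ≤ θ) (hθ : θ ≤ π) : ‖x‖ * ‖y‖ * cos θ ≤ ⟪x, y⟫ := by
  rw [← InnerProductGeometry.cos_angle_mul_norm_mul_norm, mul_comm (cos _)]
  gcongr
  exact cos_le_cos_of_nonneg_of_le_pi (InnerProductGeometry.angle_nonneg x y) hθ h

theorem angle_add_natCast_le {G : Type*} [AddMonoidWithOne G] {u : G → E} {θ : ℝ}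
    (h : ∀ i, InnerProductGeometry.angle (u i) (u (i + 1)) ≤ θ) (i : G) {k : ℕ} (hk : 1 ≤ k) :
    InnerProductGeometry.angle (u i) (u (i + k)) ≤ k * θ := by
  induction k, hk using Nat.le_induction with
  | base => simpa using h i
  | succ k _ ih =>
    calc InnerProductGeometry.angle (u i) (u (i + (k + 1 : ℕ)))
        ≤ InnerProductGeometry.angle (u i) (u (i + k))
          + InnerProductGeometry.angle (u (i + k)) (u (i + k + 1)) := by
          rw [Nat.cast_succ, ← add_assoc]
          exact InnerProductGeometry.angle_le_angle_add_angle _ _ _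
      _ ≤ k * θ + θ := add_le_add ih (h _)
      _ = (k + 1 : ℕ) * θ := by push_cast; ring

section Octagon

variable {u : ZMod 8 → E} {ℓ : ℝ}

theorem inner_add_two_eq_zero_of_angle_le (hnorm : ∀ i, ‖u i‖ = ℓ)
    (hangle : ∀ i, InnerProductGeometry.angle (u i) (u (i + 1)) ≤ π / 4) (hsum : ∑ i, u i = 0)
    (i : ZMod 8) : ⟪u i, u (i + 2)⟫ = 0 := by
  have lower (j : ZMod 8) (k : ℕ) (hk : 1 ≤ k) (hk4 : k ≤ 4) :
      ℓ ^ 2 * cos (k * (π / 4)) ≤ ⟪u j, u (j + k)⟫ := by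
    have hkπ : (k : ℝ) * (π / 4) ≤ π := by
      have : (k : ℝ) ≤ 4 := by exact_mod_cast hk4
      nlinarith [pi_pos]
    simpa only [hnorm, sq] using mul_cos_le_inner_of_angle_le (angle_add_natCast_le hangle j hk) hkπ
  have row : ∑ k, ⟪u i, u (i + k)⟫ = 0 := by
    rw [← inner_sum, Fintype.sum_equiv (Equiv.addLeft i) (fun k => u (i + k)) u fun _ => rfl,
      hsum, inner_zero_right]
  rw [ZMod.sum_univ_eight] at row
  have h1 := lower i 1 le_rfl (by norm_num)
  have h2 := lower i 2 (by norm_num) (by norm_num)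
  have h3 := lower i 3 (by norm_num) (by norm_num)
  have h4 := lower i 4 (by norm_num) (by norm_num)
  have h5 := lower (i + 5) 3 (by norm_num) (by norm_num)
  have h6 := lower (i + 6) 2 (by norm_num) (by norm_num)
  have h7 := lower (i + 7) 1 le_rfl (by norm_num)
  push_cast at h1 h2 h3 h4 h5 h6 h7
  rw [add_assoc, show (5 + 3 : ZMod 8) = 0 by decide, add_zero] at h5
  rw [add_assoc, show (6 + 2 : ZMod 8) = 0 by decide, add_zero] at h6
  rw [add_assoc, show (7 + 1 : ZMod 8) = 0 by decide, add_zero] at h7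
  have cos_three_pi_div_four : cos (3 * (π / 4)) = -(√2 / 2) := by
    rw [show 3 * (π / 4) = π - π / 4 by ring, cos_pi_sub, cos_pi_div_four]
  rw [show 2 * (π / 4) = π / 2 by ring] at h2 h6
  rw [show 4 * (π / 4) = π by ring] at h4
  simp only [one_mul, cos_three_pi_div_four, cos_pi_div_four, cos_pi_div_two, cos_pi, add_zero,
    real_inner_self_eq_norm_sq, hnorm, real_inner_comm (u i)] at row h1 h2 h3 h4 h5 h6 h7
  linarith

theorem add_two_eq_sqrt_two_smul_sub_of_angle_le (hnorm : ∀ i, ‖u i‖ = ℓ)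
    (hangle : ∀ i, InnerProductGeometry.angle (u i) (u (i + 1)) ≤ π / 4) (hsum : ∑ i, u i = 0)
    (i : ZMod 8) : u (i + 2) = √2 • u (i + 1) - u i := by
  have lower (j : ZMod 8) : ℓ ^ 2 * (√2 / 2) ≤ ⟪u j, u (j + 1)⟫ := by
    simpa [hnorm, sq, cos_pi_div_four] using
      mul_cos_le_inner_of_angle_le (hangle j) (by linarith [pi_pos])
  have h01 := lower i
  have h12 := lower (i + 1)
  rw [add_assoc, one_add_one_eq_two] at h12
  have h02 := inner_add_two_eq_zero_of_angle_le hnorm hangle hsum i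
  have hs : √2 * √2 = 2 := mul_self_sqrt zero_le_two
  rw [← sub_eq_zero, ← norm_eq_zero, ← sq_eq_zero_iff, ← real_inner_self_eq_norm_sq]
  refine le_antisymm ?_ real_inner_self_nonneg
  simp only [inner_sub_left, inner_sub_right, real_inner_smul_left, real_inner_smul_right,
    real_inner_self_eq_norm_sq, norm_smul, norm_of_nonneg (sqrt_nonneg 2), hnorm,
    real_inner_comm (u i), real_inner_comm (u (i + 1)) (u (i + 2))]
  nlinarith [mul_le_mul_of_nonneg_left (add_le_add h01 h12) (sqrt_nonneg 2)]

end Octagon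

theorem exists_linearIsometryEquiv_det_eq_one_of_orthonormal [FiniteDimensional ℝ E]
    {ι : Type*} [Fintype ι] (hι : finrank ℝ E = Fintype.card ι) {s : Set ι} (hs : s ≠ Set.univ)
    {v w : ι → E} (hv : Orthonormal ℝ (s.domRestrict v)) (hw : Orthonormal ℝ (s.domRestrict w)) :
    ∃ L : E ≃ₗᵢ[ℝ] E, LinearMap.det L.toLinearEquiv.toLinearMap = 1 ∧ ∀ i ∈ s, L (v i) = w i := by
  obtain ⟨j, hj⟩ := (Set.ne_univ_iff_exists_notMem s).mp hs
  obtain ⟨bv, hbv⟩ := hv.exists_orthonormalBasis_extension_of_card_eq hι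
  obtain ⟨bw, hbw⟩ := hw.exists_orthonormalBasis_extension_of_card_eq hι
  set L₀ := bv.equiv bw (Equiv.refl ι)
  have hL₀ (i : ι) (hi : i ∈ s) : L₀ (v i) = w i := by
    rw [← hbv i hi, ← hbw i hi]
    simp [L₀]
  have hdet : |LinearMap.det L₀.toLinearEquiv.toLinearMap| = 1 := by
    rw [← LinearMap.normDet_eq_abs_det]
    exact L₀.toLinearIsometry.normDet_eq_one
  rcases (abs_eq zero_le_one).mp hdet with h | h
  · exact ⟨L₀, h, hL₀⟩
  set K := (ℝ ∙ bw j)ᗮ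
  have hfix (i : ι) (hi : i ∈ s) : K.reflection (w i) = w i := by
    rw [K.reflection_eq_self_iff, ← hbw i hi, Submodule.mem_orthogonal_singleton_iff_inner_right]
    exact bw.orthonormal.2 (ne_of_mem_of_not_mem hi hj).symm
  refine ⟨L₀.trans K.reflection, ?_, fun i hi => by simp [hL₀ i hi, hfix i hi]⟩
  have hK : finrank ℝ Kᗮ = 1 := by
    rw [Submodule.orthogonal_orthogonal, finrank_span_singleton (bw.orthonormal.ne_zero j)]
  rw [LinearIsometryEquiv.toLinearEquiv_trans, LinearEquiv.coe_trans, LinearMap.det_comp,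
    Submodule.det_reflection, hK, h]
  norm_num

theorem orthonormal_domRestrict_pair {a b c : E} (ha : ‖a‖ = 1) (hb : ‖b‖ = 1)
    (hab : ⟪a, b⟫ = 0) : Orthonormal ℝ (({0, 1} : Set (Fin 3)).domRestrict ![a, b, c]) := by
  rw [orthonormal_iff_ite]
  rintro ⟨i, hi⟩ ⟨j, hj⟩
  simp only [Set.mem_insert_iff, Set.mem_singleton_iff] at hi hj
  rcases hi with rfl | rfl <;> rcases hj with rfl | rfl <;>
    simp [Set.domRestrict, ha, hb, hab, real_inner_comm a]

end InnerProductSpace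

section Edges

variable {V P W Q : Type*} [AddCommGroup V] [AddTorsor V P] [AddCommGroup W] [AddTorsor W Q]
  {n : ℕ}

def edgeVector (x : ZMod n → P) (i : ZMod n) : V := x (i + 1) -ᵥ x i

theorem sum_edgeVector [NeZero n] (x : ZMod n → P) : ∑ i, edgeVector x i = 0 := by
  unfold edgeVector
  rw [Finset.sum_congr rfl fun i _ => (vsub_sub_vsub_cancel_right (x (i + 1)) (x i) (x 0)).symm,
    Finset.sum_sub_distrib]
  exact sub_eq_zero.mpr (Fintype.sum_equiv (Equiv.addRight 1) _ _ fun _ => rfl)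

theorem map_vsub_eq_of_map_edgeVector [NeZero n] {F : Type*} [FunLike F V W]
    [AddMonoidHomClass F V W] (L : F) {x : ZMod n → P} {y : ZMod n → Q}
    (h : ∀ i, L (edgeVector x i) = edgeVector y i) (i : ZMod n) :
    L (x i -ᵥ x 0) = y i -ᵥ y 0 := by
  obtain ⟨k, rfl⟩ := ZMod.natCast_zmod_surjective i
  induction k with
  | zero => simp
  | succ k ih =>
    rw [Nat.cast_succ, ← vsub_add_vsub_cancel (x _) (x k), map_add, ih,
      ← vsub_add_vsub_cancel (y (k + 1)) (y k)]
    exact congrArg (· + (y k -ᵥ y 0)) (h k)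

theorem map_eq_of_add_two_eq_smul_sub [NeZero n] {R F : Type*} [Ring R] [Module R V]
    [Module R W] [FunLike F V W] [LinearMapClass F R V W] (L : F) {u : ZMod n → V}
    {u' : ZMod n → W} {c : R} (hu : ∀ i, u (i + 2) = c • u (i + 1) - u i)
    (hu' : ∀ i, u' (i + 2) = c • u' (i + 1) - u' i) (h0 : L (u 0) = u' 0) (h1 : L (u 1) = u' 1)
    (i : ZMod n) : L (u i) = u' i := by
  have two_step (k : ℕ) : L (u k) = u' k ∧ L (u (k + 1)) = u' (k + 1) := by
    induction k with
    | zero => simpa using ⟨h0, h1⟩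
    | succ k ih =>
      refine ⟨by exact_mod_cast ih.2, ?_⟩
      rw [Nat.cast_succ, add_assoc, one_add_one_eq_two, hu, hu', map_sub, map_smul, ih.1, ih.2]
  obtain ⟨k, rfl⟩ := ZMod.natCast_zmod_surjective i
  exact (two_step k).1

end Edges

namespace IsCyclooctaneRealization

variable {ℓ φ : ℝ} {x : ZMod 8 → EuclideanSpace ℝ (Fin 3)}

theorem norm_edgeVector (hx : IsCyclooctaneRealization ℓ φ x) (i : ZMod 8) :
    ‖edgeVector x i‖ = ℓ := by
  rw [edgeVector, ← dist_eq_norm_vsub, dist_comm]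
  exact hx.1 i

theorem angle_edgeVector (hx : IsCyclooctaneRealization ℓ φ x) (i : ZMod 8) :
    InnerProductGeometry.angle (edgeVector x i) (edgeVector x (i + 1)) = π - φ := by
  have h := hx.2 (i + 1)
  rw [add_sub_cancel_right, EuclideanGeometry.angle, ← neg_vsub_eq_vsub_rev (x (i + 1)) (x i),
    InnerProductGeometry.angle_neg_left] at h
  rw [edgeVector, edgeVector]
  linarith

theorem angle_edgeVector_le (hx : IsCyclooctaneRealization ℓ (3 * π / 4) x) (i : ZMod 8) :
    InnerProductGeometry.angle (edgeVector x i) (edgeVector x (i + 1)) ≤ π / 4 := by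
  rw [hx.angle_edgeVector]
  linarith

theorem edgeVector_add_two (hx : IsCyclooctaneRealization ℓ (3 * π / 4) x) (i : ZMod 8) :
    edgeVector x (i + 2) = √2 • edgeVector x (i + 1) - edgeVector x i :=
  add_two_eq_sqrt_two_smul_sub_of_angle_le hx.norm_edgeVector hx.angle_edgeVector_le
    (sum_edgeVector x) i

theorem orthonormal_edgeVector (hx : IsCyclooctaneRealization ℓ (3 * π / 4) x) (hℓ : 0 < ℓ) :
    Orthonormal ℝ (({0, 1} : Set (Fin 3)).domRestrict
      ![ℓ⁻¹ • edgeVector x 0, ℓ⁻¹ • edgeVector x 2, 0]) := by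
  have hnorm (i : ZMod 8) : ‖ℓ⁻¹ • edgeVector x i‖ = 1 := by
    rw [norm_smul, hx.norm_edgeVector, norm_inv, norm_of_nonneg hℓ.le, inv_mul_cancel₀ hℓ.ne']
  refine orthonormal_domRestrict_pair (hnorm 0) (hnorm 2) ?_
  have h := inner_add_two_eq_zero_of_angle_le hx.norm_edgeVector hx.angle_edgeVector_le
    (sum_edgeVector x) 0
  rw [zero_add] at h
  simp [real_inner_smul_left, real_inner_smul_right, h]

end IsCyclooctaneRealization

theorem cyclooctane_config_space_subsingleton_at_maximal_angle
    (ℓ : ℝ) (hℓ : 0 < ℓ)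
    (x y : ZMod 8 → EuclideanSpace ℝ (Fin 3))
    (hx : IsCyclooctaneRealization ℓ (3 * π / 4) x)
    (hy : IsCyclooctaneRealization ℓ (3 * π / 4) y) :
    ∃ f : EuclideanSpace ℝ (Fin 3) ≃ᵃⁱ[ℝ] EuclideanSpace ℝ (Fin 3),
      OrientationPreserving f ∧ ∀ i : ZMod 8, y i = f (x i) := by
  obtain ⟨L, hdet, hL⟩ := exists_linearIsometryEquiv_det_eq_one_of_orthonormal
    finrank_euclideanSpace ((Set.ne_univ_iff_exists_notMem _).mpr ⟨2, by simp⟩)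
    (hx.orthonormal_edgeVector hℓ) (hy.orthonormal_edgeVector hℓ)
  have hℓ' : ℓ⁻¹ ≠ 0 := inv_ne_zero hℓ.ne'
  have hL0 : L (edgeVector x 0) = edgeVector y 0 := by
    simpa [hℓ'] using hL 0 (by simp)
  have hL2 : L (edgeVector x 2) = edgeVector y 2 := by
    simpa [hℓ'] using hL 1 (by simp)
  have hL1 : L (edgeVector x 1) = edgeVector y 1 := by
    have hx2 := hx.edgeVector_add_two 0
    have hy2 := hy.edgeVector_add_two 0
    rw [zero_add, zero_add] at hx2 hy2
    rw [hx2, hy2, map_sub, map_smul, hL0] at hL2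
    exact smul_right_injective _ (by positivity : √2 ≠ 0) (sub_left_injective hL2)
  have hLe := map_eq_of_add_two_eq_smul_sub L hx.edgeVector_add_two hy.edgeVector_add_two hL0 hL1
  refine ⟨AffineIsometryEquiv.mk' (fun p => L (p -ᵥ x 0) +ᵥ y 0) L (x 0) (fun p => by simp),
    by rwa [OrientationPreserving, AffineIsometryEquiv.linearIsometryEquiv_mk'], fun i => ?_⟩
  rw [AffineIsometryEquiv.coe_mk', map_vsub_eq_of_map_edgeVector L hLe i, vsub_vadd]
end

section
/- Let A be a 3×3 real orthogonal matrix with det A = 1 and let t : Fin 3 → ℝ. Then for all a, b, c, d : Fin 3 → ℝ, the torsion data of the quadruple (A.mulVec a + t, A.mulVec b + t, A.mulVec c + t, A.mulVec d + t) equals the torsion data of (a, b, c, d). (Hence the torsion angles of a configuration are invariant under the action of the special Euclidean group SE(3), and the torsion angle map descends to the configuration space.) -/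
open Matrix

/-- The torsion data of a quadruple `(a, b, c, d)` of points in `ℝ³`:
the pair `(⟪m₁, m₂⟫, ⟪m₁ ×₃ m₂, e₂⟫)` where `e₁ = b - a`, `e₂ = c - b`, `e₃ = d - c`,
`m₁ = e₁ ×₃ e₂` and `m₂ = e₂ ×₃ e₃`. -/
def torsionData (a b c d : Fin 3 → ℝ) : ℝ × ℝ :=
  let e₁ := b - a
  let e₂ := c - b
  let e₃ := d - c
  let m₁ := e₁ ⨯₃ e₂
  let m₂ := e₂ ⨯₃ e₃
  (m₁ ⬝ᵥ m₂, (m₁ ⨯₃ m₂) ⬝ᵥ e₂)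

namespace Matrix

variable {R n : Type*} [CommRing R] [Fintype n] [DecidableEq n]

theorem mulVec_dotProduct_mulVec_of_transpose_mul_eq_one {A : Matrix n n R} (hA : Aᵀ * A = 1)
    (u v : n → R) : (A *ᵥ u) ⬝ᵥ (A *ᵥ v) = u ⬝ᵥ v := by
  rw [dotProduct_mulVec, vecMul_mulVec, hA, vecMul_one]

theorem adjugate_eq_transpose_of_transpose_mul_eq_one_of_det_eq_one {A : Matrix n n R}
    (hA : Aᵀ * A = 1) (hdet : A.det = 1) : A.adjugate = Aᵀ := by
  calc A.adjugate = Aᵀ * (A * A.adjugate) := by rw [← Matrix.mul_assoc, hA, Matrix.one_mul]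
    _ = Aᵀ := by rw [mul_adjugate, hdet, one_smul, Matrix.mul_one]

theorem mulVec_cross_mulVec (A : Matrix (Fin 3) (Fin 3) R) (u v : Fin 3 → R) :
    (A *ᵥ u) ⨯₃ (A *ᵥ v) = A.adjugateᵀ *ᵥ (u ⨯₃ v) := by
  ext i
  fin_cases i <;>
  · simp only [Fin.reduceFinMk, Fin.isValue, cross_apply, mulVec, dotProduct, Fin.sum_univ_three,
      adjugate_fin_three, transpose_apply, of_apply, cons_val', cons_val_fin_one, cons_val_zero,
      cons_val_one, cons_val]
    ring

theorem mulVec_cross_mulVec_of_transpose_mul_eq_one_of_det_eq_one {A : Matrix (Fin 3) (Fin 3) R}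
    (hA : Aᵀ * A = 1) (hdet : A.det = 1) (u v : Fin 3 → R) :
    (A *ᵥ u) ⨯₃ (A *ᵥ v) = A *ᵥ (u ⨯₃ v) := by
  rw [mulVec_cross_mulVec, adjugate_eq_transpose_of_transpose_mul_eq_one_of_det_eq_one hA hdet,
    transpose_transpose]

end Matrix

theorem torsionData_add_const (t a b c d : Fin 3 → ℝ) :
    torsionData (a + t) (b + t) (c + t) (d + t) = torsionData a b c d := by
  simp only [torsionData, add_sub_add_right_eq_sub]

theorem torsionData_mulVec {A : Matrix (Fin 3) (Fin 3) ℝ} (hA : Aᵀ * A = 1) (hdet : A.det = 1)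
    (a b c d : Fin 3 → ℝ) :
    torsionData (A *ᵥ a) (A *ᵥ b) (A *ᵥ c) (A *ᵥ d) = torsionData a b c d := by
  simp only [torsionData, ← mulVec_sub,
    mulVec_cross_mulVec_of_transpose_mul_eq_one_of_det_eq_one hA hdet,
    mulVec_dotProduct_mulVec_of_transpose_mul_eq_one hA]

theorem torsionData_invariant_under_SE3
    (A : Matrix (Fin 3) (Fin 3) ℝ) (hA : Aᵀ * A = 1) (hdet : A.det = 1)
    (t : Fin 3 → ℝ) (a b c d : Fin 3 → ℝ) :
    torsionData (A.mulVec a + t) (A.mulVec b + t) (A.mulVec c + t) (A.mulVec d + t) =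
      torsionData a b c d := by
  rw [torsionData_add_const, torsionData_mulVec hA hdet]
end

section
/- Let ℓ > 0 and φ ∈ (0, π), and let x, y : ZMod 8 → EuclideanSpace ℝ (Fin 3) be two realizations of the cyclooctane linkage with edge length ℓ and bond angle φ. If for every i ∈ ZMod 8 the torsion data of the quadruple (x (i-1), x i, x (i+1), x (i+2)) equals the torsion data of (y (i-1), y i, y (i+1), y (i+2)), then there exists an orientation-preserving affine isometry equivalence f of EuclideanSpace ℝ (Fin 3) with y i = f (x i) for every i. (Hence two configurations of the cyclooctane linkage agree if and only if all their torsion angles do, so the torsion angle sequence determines the equivalence class in the configuration space.) -/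
open Real EuclideanGeometry Matrix

/-- The torsion data sequence of a configuration `x : ZMod 8 → EuclideanSpace ℝ (Fin 3)`,
identifying `EuclideanSpace ℝ (Fin 3)` with `Fin 3 → ℝ`. -/
def torsionSeq (x : ZMod 8 → EuclideanSpace ℝ (Fin 3)) (i : ZMod 8) : ℝ × ℝ :=
  torsionData (WithLp.equiv 2 (Fin 3 → ℝ) (x (i - 1))) (WithLp.equiv 2 (Fin 3 → ℝ) (x i))
    (WithLp.equiv 2 (Fin 3 → ℝ) (x (i + 1))) (WithLp.equiv 2 (Fin 3 → ℝ) (x (i + 2)))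

/-!
By Lagrange's identity and the expansion of the vector triple product, the torsion data at `i`,
together with the edge lengths and bond angles, determine the dot product `eᵢ₋₁ ⬝ᵥ eᵢ₊₁` and the
triple product `det ![eᵢ₋₁, eᵢ, eᵢ₊₁]` of the edge vectors `eᵢ = x (i + 1) - x i`. Since
`0 < φ < π`, consecutive edges are never parallel, and a vector is determined by its dot products
with two non-parallel vectors and its triple product with them. The frames `(e₀, e₁, e₀ ⨯₃ e₁)` of
the two configurations have the same Gram matrix and the same positive determinant, so some
`Q ∈ SO(3)` maps one to the other; `Q` then maps every edge of `x` to the corresponding edge of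
`y`, and `p ↦ Q (p - x 0) + y 0` is the required motion.
-/

lemma det_vec3_eq_cross_dotProduct (a b c : Fin 3 → ℝ) :
    det ![a, b, c] = (a ⨯₃ b) ⬝ᵥ c := by
  rw [← triple_product_eq_det, triple_product_permutation, triple_product_permutation,
    dotProduct_comm]

lemma cross_cross_dotProduct (a b c : Fin 3 → ℝ) :
    ((a ⨯₃ b) ⨯₃ (b ⨯₃ c)) ⬝ᵥ b = (b ⬝ᵥ b) * det ![a, b, c] := by
  rw [cross_cross_eq_smul_sub_smul', sub_dotProduct, smul_dotProduct, smul_dotProduct,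
    dot_cross_self, smul_eq_mul, smul_eq_mul, det_vec3_eq_cross_dotProduct]
  ring

lemma torsionData_eq (a b c d : Fin 3 → ℝ) :
    torsionData a b c d =
      (((b - a) ⬝ᵥ (c - b)) * ((c - b) ⬝ᵥ (d - c)) - ((b - a) ⬝ᵥ (d - c)) * ((c - b) ⬝ᵥ (c - b)),
        ((c - b) ⬝ᵥ (c - b)) * det ![b - a, c - b, d - c]) := by
  simp only [torsionData, cross_dot_cross, cross_cross_dotProduct]

lemma eq_of_dotProduct_eq_of_det_eq {a b u v : Fin 3 → ℝ} (hab : a ⨯₃ b ≠ 0)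
    (ha : a ⬝ᵥ u = a ⬝ᵥ v) (hb : b ⬝ᵥ u = b ⬝ᵥ v) (hdet : det ![a, b, u] = det ![a, b, v]) :
    u = v := by
  have hframe : det ![a, b, a ⨯₃ b] ≠ 0 := by
    rwa [det_vec3_eq_cross_dotProduct, Ne, dotProduct_self_eq_zero]
  rw [det_vec3_eq_cross_dotProduct, det_vec3_eq_cross_dotProduct] at hdet
  refine sub_eq_zero.mp (eq_zero_of_mulVec_eq_zero hframe ?_)
  ext i
  fin_cases i <;> simp [mulVec, dotProduct_sub, ha, hb, hdet]

lemma dotProduct_ofLp_ofLp {n : Type*} [Fintype n] (a b : EuclideanSpace ℝ n) :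
    a.ofLp ⬝ᵥ b.ofLp = inner ℝ a b := by
  rw [EuclideanSpace.inner_eq_star_dotProduct, star_trivial, dotProduct_comm]

section OrthogonalGroup

variable {n : Type*} [Fintype n] [DecidableEq n]

lemma exists_mem_specialOrthogonalGroup_mulVec_eq_of_gram_eq {v w : n → n → ℝ}
    (hgram : ∀ i j, v i ⬝ᵥ v j = w i ⬝ᵥ w j) (hdet : det (of v) = det (of w))
    (hv : det (of v) ≠ 0) :
    ∃ Q ∈ specialOrthogonalGroup n ℝ, ∀ i, Q *ᵥ v i = w i := by
  set M := of v
  set N := of w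
  have hMu : IsUnit M.det := hv.isUnit
  have hMN : M * Mᵀ = N * Nᵀ := ext hgram
  refine ⟨(M⁻¹ * N)ᵀ, mem_specialOrthogonalGroup_iff.mpr ⟨?_, ?_⟩, fun i => ?_⟩
  · rw [mem_orthogonalGroup_iff', transpose_transpose]
    calc M⁻¹ * N * (M⁻¹ * N)ᵀ = M⁻¹ * (N * Nᵀ) * M⁻¹ᵀ := by
          simp only [transpose_mul, Matrix.mul_assoc]
      _ = (M⁻¹ * M) * (M⁻¹ * M)ᵀ := by
          rw [← hMN]
          simp only [transpose_mul, Matrix.mul_assoc]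
      _ = 1 := by rw [nonsing_inv_mul _ hMu, transpose_one, Matrix.mul_one]
  · rw [det_transpose, det_mul, det_nonsing_inv, ← hdet, Ring.inverse_mul_cancel _ hMu]
  · rw [← vecMul_transpose, transpose_transpose]
    exact congrFun (mul_nonsing_inv_cancel_left M N hMu) i

lemma mulVec_dotProduct_mulVec {R : Type*} [CommRing R] {Q : Matrix n n R}
    (hQ : Q ∈ orthogonalGroup n R) (a b : n → R) : (Q *ᵥ a) ⬝ᵥ (Q *ᵥ b) = a ⬝ᵥ b := by
  rw [dotProduct_mulVec, ← vecMul_transpose, vecMul_vecMul, (mem_orthogonalGroup_iff' n R).mp hQ,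
    vecMul_one]

noncomputable def linearIsometryEquivOfMemOrthogonalGroup {Q : Matrix n n ℝ}
    (hQ : Q ∈ orthogonalGroup n ℝ) : EuclideanSpace ℝ n ≃ₗᵢ[ℝ] EuclideanSpace ℝ n :=
  ((toEuclideanLin Q).isometryOfInner fun a b => by
    rw [← dotProduct_ofLp_ofLp, ← dotProduct_ofLp_ofLp, ofLp_toLpLin, ofLp_toLpLin]
    exact mulVec_dotProduct_mulVec hQ _ _).toLinearIsometryEquiv rfl

variable {Q : Matrix n n ℝ} (hQ : Q ∈ orthogonalGroup n ℝ)

@[simp]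
lemma ofLp_linearIsometryEquivOfMemOrthogonalGroup (v : EuclideanSpace ℝ n) :
    (linearIsometryEquivOfMemOrthogonalGroup hQ v).ofLp = Q *ᵥ v.ofLp :=
  rfl

lemma det_linearIsometryEquivOfMemOrthogonalGroup :
    LinearMap.det (linearIsometryEquivOfMemOrthogonalGroup hQ).toLinearEquiv.toLinearMap =
      Q.det :=
  LinearMap.det_toLpLin 2 Q

end OrthogonalGroup

lemma det_vec3_mulVec {R : Type*} [CommRing R] (Q : Matrix (Fin 3) (Fin 3) R)
    (a b c : Fin 3 → R) : det ![Q *ᵥ a, Q *ᵥ b, Q *ᵥ c] = det Q * det ![a, b, c] := by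
  have hrows : of ![Q *ᵥ a, Q *ᵥ b, Q *ᵥ c] = of ![a, b, c] * Qᵀ := by
    funext i
    rw [mul_apply_eq_vecMul, vecMul_transpose]
    fin_cases i <;> rfl
  have hdet := congrArg det hrows
  rw [det_mul, det_transpose, mul_comm] at hdet
  exact hdet

lemma exists_mem_specialOrthogonalGroup_mulVec_eq {a b a' b' : Fin 3 → ℝ} (hab : a ⨯₃ b ≠ 0)
    (ha : a ⬝ᵥ a = a' ⬝ᵥ a') (hb : b ⬝ᵥ b = b' ⬝ᵥ b') (hab' : a ⬝ᵥ b = a' ⬝ᵥ b') :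
    ∃ Q ∈ specialOrthogonalGroup (Fin 3) ℝ, Q *ᵥ a = a' ∧ Q *ᵥ b = b' := by
  have hcross : (a ⨯₃ b) ⬝ᵥ (a ⨯₃ b) = (a' ⨯₃ b') ⬝ᵥ (a' ⨯₃ b') := by
    rw [cross_dot_cross, cross_dot_cross, dotProduct_comm b a, dotProduct_comm b' a', ha, hb,
      hab']
  obtain ⟨Q, hQ, hrows⟩ := exists_mem_specialOrthogonalGroup_mulVec_eq_of_gram_eq
    (v := ![a, b, a ⨯₃ b]) (w := ![a', b', a' ⨯₃ b'])
    (by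
      intro i j
      fin_cases i <;> fin_cases j <;>
        simp [ha, hb, hab', hcross, dot_self_cross, dot_cross_self, dotProduct_comm b a,
          dotProduct_comm b' a', dotProduct_comm (a ⨯₃ b) a, dotProduct_comm (a' ⨯₃ b') a',
          dotProduct_comm (a ⨯₃ b) b, dotProduct_comm (a' ⨯₃ b') b'])
    (by
      change det ![a, b, a ⨯₃ b] = det ![a', b', a' ⨯₃ b']
      rw [det_vec3_eq_cross_dotProduct, det_vec3_eq_cross_dotProduct, hcross])
    (by
      change det ![a, b, a ⨯₃ b] ≠ 0
      rwa [det_vec3_eq_cross_dotProduct, Ne, dotProduct_self_eq_zero])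
  exact ⟨Q, hQ, hrows 0, hrows 1⟩

lemma mulVec_eq_of_dotProduct_eq_of_det_eq {Q : Matrix (Fin 3) (Fin 3) ℝ}
    (hQ : Q ∈ specialOrthogonalGroup (Fin 3) ℝ) {u v : ℕ → Fin 3 → ℝ}
    (hv : ∀ n, v n ⨯₃ v (n + 1) ≠ 0) (h₀ : Q *ᵥ u 0 = v 0) (h₁ : Q *ᵥ u 1 = v 1)
    (hdot₁ : ∀ n, u (n + 1) ⬝ᵥ u (n + 2) = v (n + 1) ⬝ᵥ v (n + 2))
    (hdot₂ : ∀ n, u n ⬝ᵥ u (n + 2) = v n ⬝ᵥ v (n + 2))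
    (hdet : ∀ n, det ![u n, u (n + 1), u (n + 2)] = det ![v n, v (n + 1), v (n + 2)]) :
    ∀ n, Q *ᵥ u n = v n := by
  obtain ⟨hQo, hQdet⟩ := mem_specialOrthogonalGroup_iff.mp hQ
  suffices h : ∀ n, Q *ᵥ u n = v n ∧ Q *ᵥ u (n + 1) = v (n + 1) from fun n => (h n).1
  intro n
  induction n with
  | zero => exact ⟨h₀, h₁⟩
  | succ n ih =>
    obtain ⟨hn, hn₁⟩ := ih
    refine ⟨hn₁, eq_of_dotProduct_eq_of_det_eq (hv n) ?_ ?_ ?_⟩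
    · rw [← hdot₂, ← hn, mulVec_dotProduct_mulVec hQo]
    · rw [← hdot₁, ← hn₁, mulVec_dotProduct_mulVec hQo]
    · rw [← hdet, ← hn, ← hn₁, det_vec3_mulVec, hQdet, one_mul]

def edge (x : ZMod 8 → EuclideanSpace ℝ (Fin 3)) (i : ZMod 8) : Fin 3 → ℝ :=
  (x (i + 1) - x i).ofLp

lemma torsionSeq_add_one (x : ZMod 8 → EuclideanSpace ℝ (Fin 3)) (i : ZMod 8) :
    torsionSeq x (i + 1) =
      ((edge x i ⬝ᵥ edge x (i + 1)) * (edge x (i + 1) ⬝ᵥ edge x (i + 1 + 1)) -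
          (edge x i ⬝ᵥ edge x (i + 1 + 1)) * (edge x (i + 1) ⬝ᵥ edge x (i + 1)),
        (edge x (i + 1) ⬝ᵥ edge x (i + 1)) *
          det ![edge x i, edge x (i + 1), edge x (i + 1 + 1)]) := by
  have h₂ : i + 1 + 2 = i + 1 + 1 + 1 := by ring
  simp only [torsionSeq, torsionData_eq, edge, WithLp.equiv_apply, WithLp.ofLp_sub,
    add_sub_cancel_right, h₂]

namespace IsCyclooctaneRealization

variable {ℓ φ : ℝ} {x y : ZMod 8 → EuclideanSpace ℝ (Fin 3)}

lemma dotProduct_edge_self (hx : IsCyclooctaneRealization ℓ φ x) (i : ZMod 8) :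
    edge x i ⬝ᵥ edge x i = ℓ ^ 2 := by
  rw [edge, dotProduct_ofLp_ofLp, real_inner_self_eq_norm_sq, ← dist_eq_norm, dist_comm, hx.1 i]

lemma dotProduct_edge_succ (hx : IsCyclooctaneRealization ℓ φ x) (i : ZMod 8) :
    edge x i ⬝ᵥ edge x (i + 1) = -(ℓ ^ 2 * cos φ) := by
  have hangle := hx.2 (i + 1)
  rw [add_sub_cancel_right] at hangle
  have hcos := InnerProductGeometry.cos_angle_mul_norm_mul_norm
    (x i -ᵥ x (i + 1)) (x (i + 1 + 1) -ᵥ x (i + 1))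
  rw [← EuclideanGeometry.angle, hangle, ← dist_eq_norm_vsub, ← dist_eq_norm_vsub, hx.1 i,
    dist_comm, hx.1 (i + 1), vsub_eq_sub, vsub_eq_sub] at hcos
  rw [edge, edge, dotProduct_ofLp_ofLp, ← neg_sub, inner_neg_left, ← hcos]
  ring

lemma cross_edge_ne_zero (hℓ : 0 < ℓ) (hφ : φ ∈ Set.Ioo 0 π)
    (hx : IsCyclooctaneRealization ℓ φ x) (i : ZMod 8) :
    edge x i ⨯₃ edge x (i + 1) ≠ 0 := by
  rw [Ne, ← dotProduct_self_eq_zero, cross_dot_cross, hx.dotProduct_edge_self,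
    hx.dotProduct_edge_self, dotProduct_comm (edge x (i + 1)), hx.dotProduct_edge_succ]
  have hsin : 0 < sin φ := sin_pos_of_pos_of_lt_pi hφ.1 hφ.2
  have hsq : ℓ ^ 2 * ℓ ^ 2 - -(ℓ ^ 2 * cos φ) * -(ℓ ^ 2 * cos φ) = (ℓ ^ 2 * sin φ) ^ 2 := by
    linear_combination (-ℓ ^ 4) * sin_sq_add_cos_sq φ
  rw [hsq]
  positivity

lemma dotProduct_edge_add_two_eq (hℓ : 0 < ℓ) (hx : IsCyclooctaneRealization ℓ φ x)
    (hy : IsCyclooctaneRealization ℓ φ y) {i : ZMod 8}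
    (h : torsionSeq x (i + 1) = torsionSeq y (i + 1)) :
    edge x i ⬝ᵥ edge x (i + 1 + 1) = edge y i ⬝ᵥ edge y (i + 1 + 1) := by
  have hfst := congrArg Prod.fst h
  simp only [torsionSeq_add_one, hx.dotProduct_edge_succ, hy.dotProduct_edge_succ,
    hx.dotProduct_edge_self, hy.dotProduct_edge_self] at hfst
  exact mul_right_cancel₀ (pow_ne_zero 2 hℓ.ne') (by linarith)

lemma det_edge_eq (hℓ : 0 < ℓ) (hx : IsCyclooctaneRealization ℓ φ x)
    (hy : IsCyclooctaneRealization ℓ φ y) {i : ZMod 8}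
    (h : torsionSeq x (i + 1) = torsionSeq y (i + 1)) :
    det ![edge x i, edge x (i + 1), edge x (i + 1 + 1)] =
      det ![edge y i, edge y (i + 1), edge y (i + 1 + 1)] := by
  have hsnd := congrArg Prod.snd h
  simp only [torsionSeq_add_one, hx.dotProduct_edge_self, hy.dotProduct_edge_self] at hsnd
  exact mul_left_cancel₀ (pow_ne_zero 2 hℓ.ne') hsnd

lemma exists_mem_specialOrthogonalGroup_mulVec_edge_eq (hℓ : 0 < ℓ) (hφ : φ ∈ Set.Ioo 0 π)
    (hx : IsCyclooctaneRealization ℓ φ x) (hy : IsCyclooctaneRealization ℓ φ y)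
    (h : ∀ i, torsionSeq x i = torsionSeq y i) :
    ∃ Q ∈ specialOrthogonalGroup (Fin 3) ℝ, ∀ n : ℕ, Q *ᵥ edge x n = edge y n := by
  have hcast₁ (n : ℕ) : ((n + 1 : ℕ) : ZMod 8) = n + 1 := Nat.cast_succ n
  have hcast₂ (n : ℕ) : ((n + 2 : ℕ) : ZMod 8) = n + 1 + 1 := by push_cast; ring
  obtain ⟨Q, hQ, hQ₀, hQ₁⟩ := exists_mem_specialOrthogonalGroup_mulVec_eq
    (a' := edge y 0) (b' := edge y (0 + 1)) (hx.cross_edge_ne_zero hℓ hφ 0)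
    (by rw [hx.dotProduct_edge_self, hy.dotProduct_edge_self])
    (by rw [hx.dotProduct_edge_self, hy.dotProduct_edge_self])
    (by rw [hx.dotProduct_edge_succ, hy.dotProduct_edge_succ])
  refine ⟨Q, hQ, mulVec_eq_of_dotProduct_eq_of_det_eq hQ (u := fun n => edge x n)
    (v := fun n => edge y n) (fun n => ?_) ?_ ?_ (fun n => ?_) (fun n => ?_) (fun n => ?_)⟩
  · simpa only [hcast₁] using hy.cross_edge_ne_zero hℓ hφ n
  · simpa using hQ₀
  · simpa using hQ₁
  · simp only [hcast₁, hx.dotProduct_edge_succ, hy.dotProduct_edge_succ]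
  · simpa only [hcast₂] using hx.dotProduct_edge_add_two_eq hℓ hy (h _)
  · simpa only [hcast₁, hcast₂] using hx.det_edge_eq hℓ hy (h _)

end IsCyclooctaneRealization

theorem cyclooctaneRealization_congr_of_torsionSeq_eq
    (ℓ φ : ℝ) (hℓ : 0 < ℓ) (hφ : φ ∈ Set.Ioo 0 π)
    (x y : ZMod 8 → EuclideanSpace ℝ (Fin 3))
    (hx : IsCyclooctaneRealization ℓ φ x)
    (hy : IsCyclooctaneRealization ℓ φ y)
    (h : ∀ i : ZMod 8, torsionSeq x i = torsionSeq y i) :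
    ∃ f : EuclideanSpace ℝ (Fin 3) ≃ᵃⁱ[ℝ] EuclideanSpace ℝ (Fin 3),
      OrientationPreserving f ∧ ∀ i : ZMod 8, y i = f (x i) := by
  obtain ⟨Q, hQ, hQe⟩ := hx.exists_mem_specialOrthogonalGroup_mulVec_edge_eq hℓ hφ hy h
  obtain ⟨hQo, hQdet⟩ := mem_specialOrthogonalGroup_iff.mp hQ
  set L := linearIsometryEquivOfMemOrthogonalGroup hQo
  have hL (n : ℕ) : L (x (n + 1) - x n) = y (n + 1) - y n :=
    WithLp.ofLp_injective 2 ((ofLp_linearIsometryEquivOfMemOrthogonalGroup hQo _).trans (hQe n))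
  set f := AffineIsometryEquiv.mk' (fun p => L (p - x 0) + y 0) L (x 0) (fun p => by simp)
  have hf (n : ℕ) : y n = f (x n) := by
    induction n with
    | zero => simp [f]
    | succ n ih =>
      calc y (n + 1 : ℕ) = L (x (n + 1) - x n) + y n := by push_cast; rw [hL]; abel
        _ = f (x (n + 1 : ℕ)) := by
          rw [ih]
          simp only [f, AffineIsometryEquiv.coe_mk']
          push_cast
          rw [← add_assoc, ← map_add, sub_add_sub_cancel]
  refine ⟨f, ?_, fun i => by simpa using hf i.val⟩
  rw [OrientationPreserving, AffineIsometryEquiv.linearIsometryEquiv_mk',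
    det_linearIsometryEquivOfMemOrthogonalGroup, hQdet]
end
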